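/- arXiv:2210.17320 — 2 statements merged into one kernel-verified Lean document; each statement's English description precedes it below -/
import Mathlib

section
/- For the sequence z defined by z 0 = 0 and z (k+1) = z k + (1+ω)^(u k) / ω^(2·v k), where ω = e^{iπ/3} and u k, v k count the digits 1 and 2 respectively in the base-4 expansion of k, one has z (4n) = 3 · z n for all n. -/
noncomputable def ω : ℂ := Complex.exp (Complex.I * Real.pi / 3)

def u (k : ℕ) : ℕ := (Nat.digits 4 k).count 1

def v (k : ℕ) : ℕ := (Nat.digits 4 k).count 2

/-!
The step added at index `k` is `w k = (1 + ω)^(u k) / ω^(2 v k)`, so `z k = ∑_{i<k} w i`.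
Appending a base-4 digit to `n` multiplies `w n` by `1, 1 + ω, ω⁻², 1`, and these sum to `3`
since `ω³ = -1`. Grouping `∑_{i<4n} w i` into blocks of four therefore gives `3 ∑_{i<n} w i`.
-/

open Finset

theorem Nat.count_digits_add_mul {b d x : ℕ} (hb : 1 < b) (hx : x < b) (hd : d ≠ 0) (n : ℕ) :
    (b.digits (x + b * n)).count d = (b.digits n).count d + if x = d then 1 else 0 := by
  rcases eq_or_ne x 0 with rfl | hx0
  · rcases eq_or_ne n 0 with rfl | hn0
    · simp [Ne.symm hd]
    · rw [Nat.digits_add b hb 0 n hx (Or.inr hn0), List.count_cons]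
      simp [Ne.symm hd]
  · rw [Nat.digits_add b hb x n hx (Or.inl hx0), List.count_cons]
    simp

theorem eq_sum_range_of_add_one {M : Type*} [AddCommMonoid M] {z w : ℕ → M} (h0 : z 0 = 0)
    (h : ∀ k, z (k + 1) = z k + w k) (n : ℕ) : z n = ∑ i ∈ range n, w i := by
  induction n with
  | zero => simp [h0]
  | succ n ih => rw [h, ih, sum_range_succ]

theorem sum_range_mul_eq_mul_of_blocks {R : Type*} [NonUnitalNonAssocSemiring R] {f : ℕ → R}
    {b : ℕ} {c : R} (hf : ∀ n, ∑ j ∈ range b, f (b * n + j) = c * f n) (n : ℕ) :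
    ∑ i ∈ range (b * n), f i = c * ∑ i ∈ range n, f i := by
  induction n with
  | zero => simp
  | succ n ih => rw [mul_add_one, sum_range_add, ih, hf, sum_range_succ, mul_add]

theorem omega_pow_three : ω ^ 3 = -1 := by
  rw [ω, ← Complex.exp_nat_mul, ← Complex.exp_pi_mul_I]
  congr 1
  push_cast
  ring

theorem omega_ne_zero : ω ≠ 0 := Complex.exp_ne_zero _

noncomputable def kochawaveStep (k : ℕ) : ℂ := (1 + ω) ^ u k / ω ^ (2 * v k)

theorem u_add_four_mul {j : ℕ} (hj : j < 4) (n : ℕ) :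
    u (j + 4 * n) = u n + if j = 1 then 1 else 0 :=
  Nat.count_digits_add_mul (by norm_num) hj one_ne_zero n

theorem v_add_four_mul {j : ℕ} (hj : j < 4) (n : ℕ) :
    v (j + 4 * n) = v n + if j = 2 then 1 else 0 :=
  Nat.count_digits_add_mul (by norm_num) hj two_ne_zero n

theorem sum_kochawaveStep_block (n : ℕ) :
    ∑ j ∈ range 4, kochawaveStep (4 * n + j) = 3 * kochawaveStep n := by
  simp only [sum_range_succ, sum_range_zero, kochawaveStep, add_comm (4 * n)]
  simp (disch := norm_num) only [u_add_four_mul, v_add_four_mul]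
  norm_num
  have := omega_ne_zero
  field_simp
  linear_combination (ω ^ (2 * v n) * (1 + ω) ^ u n) * omega_pow_three

theorem kochawave_z_scaling (z : ℕ → ℂ) (h0 : z 0 = 0)
    (hrec : ∀ k, z (k + 1) = z k + (1 + ω) ^ (u k) / ω ^ (2 * v k)) :
    ∀ n, z (4 * n) = 3 * z n := by
  have hz := eq_sum_range_of_add_one (w := kochawaveStep) h0 hrec
  intro n
  rw [hz, hz, sum_range_mul_eq_mul_of_blocks sum_kochawaveStep_block]
end

section
/- After n iterations of the Kochawave construction, the portion of the original unit segment [0,1] remaining in the figure is the n-th stage C n of the ternary Cantor set construction: C 0 = [0,1] and C (n+1) = (1/3)·C n ∪ (2/3 + (1/3)·C n); consequently the total length of C n is (2/3)^n and tends to 0. -/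
open MeasureTheory Set Pointwise

lemma koch_image_smul (s : Set ℝ) : (fun x => x / 3) '' s = (3⁻¹ : ℝ) • s := by
  rw [← Set.image_smul]

  ext x
  simp [smul_eq_mul, div_eq_inv_mul]

lemma koch_image2 (s : Set ℝ) :
    (fun x => 2 / 3 + x / 3) '' s = (2/3 : ℝ) +ᵥ ((3⁻¹ : ℝ) • s) := by
  rw [← koch_image_smul, ← Set.image_vadd, ← Set.image_comp]
  rfl

theorem kochawave_cantor_measure (C : ℕ → Set ℝ) (h0 : C 0 = Set.Icc 0 1)
    (hrec : ∀ n, C (n + 1) = (fun x => x / 3) '' C n ∪ (fun x => 2 / 3 + x / 3) '' C n) :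
    (∀ n, MeasureTheory.volume (C n) = ENNReal.ofReal ((2 / 3) ^ n)) ∧
    Filter.Tendsto (fun n => MeasureTheory.volume (C n)) Filter.atTop (nhds 0) := by
  have key : ∀ n, C n ⊆ Icc 0 1 ∧ MeasurableSet (C n) ∧
      volume (C n) = ENNReal.ofReal ((2 / 3) ^ n) := by
    intro n
    induction n with
    | zero =>
      refine ⟨by rw [h0], by rw [h0]; exact measurableSet_Icc, ?_⟩
      rw [h0, Real.volume_Icc]; norm_num
    | succ n ih =>
      obtain ⟨hsub, hmeas, hvol⟩ := ih
      have e1 : (fun x => x / 3) '' C n = (3⁻¹ : ℝ) • C n := koch_image_smul _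
      have e2 : (fun x => 2 / 3 + x / 3) '' C n = (2/3 : ℝ) +ᵥ ((3⁻¹ : ℝ) • C n) :=
        koch_image2 _
      have hm1 : MeasurableSet ((3⁻¹ : ℝ) • C n) := hmeas.const_smul₀ _
      have hm2 : MeasurableSet ((2/3 : ℝ) +ᵥ ((3⁻¹ : ℝ) • C n)) := hm1.const_vadd _
      have hsub1 : (3⁻¹ : ℝ) • C n ⊆ Icc 0 (1/3 : ℝ) := by
        rintro _ ⟨x, hx, rfl⟩
        obtain ⟨h01, h11⟩ := hsub hx
        constructor <;> simp [smul_eq_mul] <;> nlinarith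
      have hsub2 : (2/3 : ℝ) +ᵥ ((3⁻¹ : ℝ) • C n) ⊆ Icc (2/3 : ℝ) 1 := by
        rintro _ ⟨y, hy, rfl⟩
        obtain ⟨h01, h11⟩ := hsub1 hy
        constructor <;> simp [vadd_eq_add] <;> linarith
      have hdisj : Disjoint ((3⁻¹ : ℝ) • C n) ((2/3 : ℝ) +ᵥ ((3⁻¹ : ℝ) • C n)) := by
        refine Set.disjoint_left.2 fun x hx1 hx2 => ?_
        have := (hsub1 hx1).2
        have := (hsub2 hx2).1
        linarith
      have hvol1 : volume ((3⁻¹ : ℝ) • C n) = ENNReal.ofReal (3⁻¹) * volume (C n) := by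
        rw [Measure.addHaar_smul_of_nonneg volume (by norm_num) (C n)]
        simp
      have hvol2 : volume ((2/3 : ℝ) +ᵥ ((3⁻¹ : ℝ) • C n)) = volume ((3⁻¹ : ℝ) • C n) :=
        measure_vadd _ _ _
      refine ⟨?_, ?_, ?_⟩
      · rw [hrec n, e1, e2]
        exact Set.union_subset (hsub1.trans (Icc_subset_Icc (le_refl _) (by norm_num)))
          (hsub2.trans (Icc_subset_Icc (by norm_num) (le_refl _)))
      · rw [hrec n, e1, e2]; exact hm1.union hm2
      · rw [hrec n, e1, e2, measure_union hdisj hm2, hvol2, hvol1, hvol,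
          ← ENNReal.ofReal_mul (by norm_num), ← two_mul, ← ENNReal.ofReal_ofNat,
          ← ENNReal.ofReal_mul (by norm_num)]
        congr 1
        ring
  refine ⟨fun n => (key n).2.2, ?_⟩
  have : Filter.Tendsto (fun n : ℕ => ENNReal.ofReal ((2 / 3 : ℝ) ^ n)) Filter.atTop (nhds 0) := by
    rw [show (0 : ENNReal) = ENNReal.ofReal 0 by simp]
    exact (ENNReal.continuous_ofReal.tendsto 0).comp
      (tendsto_pow_atTop_nhds_zero_of_lt_one (by norm_num) (by norm_num))
  exact this.congr fun n => ((key n).2.2).symm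
end
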